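/- The set C of all compositions of all positive integers, equipped with the composition operation ∘, is a monoid: the operation ∘ is associative, and the composition (1) is a two-sided identity (1∘α = α∘1 = α for every composition α). -/

import Mathlib

/-- The size `|β|` of a composition, i.e. the sum of its components. -/
def size (l : List ℕ+) : ℕ := (l.map fun x => (x : ℕ)).sum

/-- Near concatenation `α ⊙ β` of two (nonempty) compositions. -/
def odot (a b : List ℕ+) : List ℕ+ :=
  if a = [] then b
  else if b = [] then a
  else a.dropLast ++ (a.getLastI + b.headI) :: b.tail

/-- `β^{⊙ m}`, the `m`-fold near concatenation of `β` with itself. -/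
def odotPow (b : List ℕ+) : ℕ → List ℕ+
  | 0 => []
  | n + 1 => odot (odotPow b n) b

/-- The composition operation `α ∘ β = β^{⊙α₁} · β^{⊙α₂} ⋯ β^{⊙αₖ}`. -/
def compOp (a b : List ℕ+) : List ℕ+ := (a.map fun ai => odotPow b (ai : ℕ)).flatten

/-- `β₁ ∘ β₂ ∘ ⋯ ∘ βₖ` (the composition `1` is a two-sided identity for `∘`). -/
def compFold (l : List (List ℕ+)) : List ℕ+ := l.foldr compOp [1]

/-- The list of all coarsenings of a composition. -/
def coarsenings : List ℕ+ → List (List ℕ+)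
  | [] => [[]]
  | [a] => [[a]]
  | a :: b :: t => ((coarsenings (b :: t)).map (a :: ·)) ++ coarsenings ((a + b) :: t)
  termination_by l => l.length

/-- The multiset `M(β)` of partitions (as multisets of parts) of all coarsenings of `β`. -/
def Mset (b : List ℕ+) : Multiset (Multiset ℕ+) :=
  ↑((coarsenings b).map fun l => (l : Multiset ℕ+))

/-!
Near concatenation is associative with unit `[]`, so `β^{⊙m}` is a monoid power and
`β^{⊙(m+n)} = β^{⊙m} ⊙ β^{⊙n}`. Right composition `α ↦ α ∘ γ` turns `·` into `·` by
definition, and also turns `⊙` into `⊙`: fusing the last part `x` of `α` with the first part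
`y` of `β` replaces the blocks `γ^{⊙x}`, `γ^{⊙y}` by `γ^{⊙(x+y)} = γ^{⊙x} ⊙ γ^{⊙y}`.
Hence `(β ∘ γ)^{⊙n} = β^{⊙n} ∘ γ`, and associativity follows part by part of `α`.
The identities reduce to `(1)^{⊙x} = (x)`.
-/

@[simp]
lemma odot_nil_left (b : List ℕ+) : odot [] b = b := by simp [odot]

@[simp]
lemma odot_nil_right (a : List ℕ+) : odot a [] = a := by simp [odot]

lemma odot_ne_nil (a : List ℕ+) {b : List ℕ+} (hb : b ≠ []) : odot a b ≠ [] := by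
  unfold odot; split_ifs <;> simp [hb]

lemma odot_append_singleton_cons (u v : List ℕ+) (x y : ℕ+) :
    odot (u ++ [x]) (y :: v) = u ++ (x + y) :: v := by
  simp [odot, List.getLastI_eq_getLast?_getD]

lemma odot_singleton_cons (x y : ℕ+) (v : List ℕ+) : odot [x] (y :: v) = (x + y) :: v :=
  odot_append_singleton_cons [] v x y

lemma odot_append_left {v : List ℕ+} (hv : v ≠ []) (u w : List ℕ+) :
    odot (u ++ v) w = u ++ odot v w := by
  rcases w with _ | ⟨y, w⟩
  · simp
  obtain ⟨v, x, rfl⟩ := (v.eq_nil_or_concat').resolve_left hv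
  rw [← List.append_assoc, odot_append_singleton_cons, odot_append_singleton_cons,
    List.append_assoc]

lemma odot_append_right (u : List ℕ+) {v : List ℕ+} (hv : v ≠ []) (w : List ℕ+) :
    odot u (v ++ w) = odot u v ++ w := by
  obtain rfl | ⟨u, x, rfl⟩ := u.eq_nil_or_concat'
  · simp
  obtain ⟨y, v, rfl⟩ := List.exists_cons_of_ne_nil hv
  rw [List.cons_append, odot_append_singleton_cons, odot_append_singleton_cons,
    List.append_assoc, List.cons_append]

lemma odot_cons_left (x : ℕ+) {v : List ℕ+} (hv : v ≠ []) (w : List ℕ+) :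
    odot (x :: v) w = x :: odot v w :=
  odot_append_left hv [x] w

lemma odot_singleton_assoc (x y : ℕ+) {b : List ℕ+} (hb : b ≠ []) :
    odot (odot [x] b) [y] = odot [x] (odot b [y]) := by
  obtain ⟨z, v, rfl⟩ := List.exists_cons_of_ne_nil hb
  obtain rfl | hv := eq_or_ne v []
  · simp only [odot_singleton_cons, add_assoc]
  · rw [odot_singleton_cons, odot_cons_left _ hv, odot_cons_left _ hv, odot_singleton_cons]

lemma odot_assoc (a b c : List ℕ+) : odot (odot a b) c = odot a (odot b c) := by
  obtain rfl | hb := eq_or_ne b []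
  · simp
  obtain rfl | ⟨u, x, rfl⟩ := a.eq_nil_or_concat'
  · simp
  rcases c with _ | ⟨y, w⟩
  · simp
  have hx : [x] ≠ [] := List.cons_ne_nil x []
  have hy : [y] ≠ [] := List.cons_ne_nil y []
  rw [← List.singleton_append (l := w), odot_append_left hx, odot_append_left (odot_ne_nil _ hb),
    odot_append_right _ hy, odot_append_right _ hy, odot_append_right _ (odot_ne_nil _ hy),
    odot_append_left hx, odot_singleton_assoc x y hb, List.append_assoc]

lemma odotPow_ne_nil {b : List ℕ+} (hb : b ≠ []) {n : ℕ} (hn : n ≠ 0) : odotPow b n ≠ [] := by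
  obtain ⟨n, rfl⟩ := Nat.exists_eq_succ_of_ne_zero hn
  exact odot_ne_nil _ hb

lemma odotPow_add (b : List ℕ+) (m n : ℕ) :
    odotPow b (m + n) = odot (odotPow b m) (odotPow b n) := by
  induction n with
  | zero => simp [odotPow]
  | succ n ih => rw [← Nat.add_assoc, odotPow, odotPow, ih, odot_assoc]

lemma odotPow_nil (n : ℕ) : odotPow [] n = [] := by
  induction n with
  | zero => rfl
  | succ n ih => rw [odotPow, ih, odot_nil_left]

lemma odotPow_singleton_one (x : ℕ+) : odotPow [1] x = [x] := by
  induction x using PNat.recOn with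
  | one => rfl
  | succ x ih => rw [PNat.add_coe, PNat.one_coe, odotPow, ih, odot_singleton_cons]

@[simp]
lemma compOp_nil_left (b : List ℕ+) : compOp [] b = [] := rfl

lemma compOp_nil_right (a : List ℕ+) : compOp a [] = [] := by
  simp [compOp, odotPow_nil]

lemma compOp_cons (x : ℕ+) (a b : List ℕ+) :
    compOp (x :: a) b = odotPow b x ++ compOp a b := by
  simp [compOp]

lemma compOp_append (a a' b : List ℕ+) :
    compOp (a ++ a') b = compOp a b ++ compOp a' b := by
  simp [compOp]

lemma compOp_ne_nil {a b : List ℕ+} (ha : a ≠ []) (hb : b ≠ []) : compOp a b ≠ [] := by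
  obtain ⟨x, a, rfl⟩ := List.exists_cons_of_ne_nil ha
  rw [compOp_cons]
  exact List.append_ne_nil_of_left_ne_nil (odotPow_ne_nil hb x.ne_zero) _

lemma compOp_odot (a b c : List ℕ+) : compOp (odot a b) c = odot (compOp a c) (compOp b c) := by
  obtain rfl | hc := eq_or_ne c []
  · simp [compOp_nil_right]
  obtain rfl | ⟨u, x, rfl⟩ := a.eq_nil_or_concat'
  · simp
  rcases b with _ | ⟨y, v⟩
  · simp
  have hx := odotPow_ne_nil hc x.ne_zero
  have hy := odotPow_ne_nil hc y.ne_zero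
  rw [odot_append_singleton_cons, compOp_append, compOp_cons, compOp_append, compOp_cons,
    compOp_cons, compOp_nil_left, List.append_nil, odot_append_left hx,
    odot_append_right _ hy, ← odotPow_add, PNat.add_coe]

lemma odotPow_compOp (b c : List ℕ+) (n : ℕ) :
    odotPow (compOp b c) n = compOp (odotPow b n) c := by
  induction n with
  | zero => rfl
  | succ n ih => rw [odotPow, odotPow, ih, compOp_odot]

lemma compOp_assoc (a b c : List ℕ+) : compOp (compOp a b) c = compOp a (compOp b c) := by
  induction a with
  | nil => rfl
  | cons x a ih => rw [compOp_cons, compOp_append, ih, compOp_cons, odotPow_compOp]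

lemma compOp_one_left (a : List ℕ+) : compOp [1] a = a := by
  simp [compOp, odotPow]

lemma compOp_one_right (a : List ℕ+) : compOp a [1] = a := by
  induction a with
  | nil => rfl
  | cons x a ih => rw [compOp_cons, odotPow_singleton_one, ih, List.singleton_append]

/-- The set of compositions of positive integers (nonempty lists of
positive integers) is a monoid under `∘`: it is closed under `∘`, `∘` is associative,
and the composition `(1)` is a two-sided identity. -/
theorem compOp_monoid :
    (∀ a b : List ℕ+, a ≠ [] → b ≠ [] → compOp a b ≠ []) ∧
    (∀ a b c : List ℕ+, a ≠ [] → b ≠ [] → c ≠ [] →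
      compOp (compOp a b) c = compOp a (compOp b c)) ∧
    (∀ a : List ℕ+, a ≠ [] → compOp [1] a = a ∧ compOp a [1] = a) :=
  ⟨fun _ _ ha hb => compOp_ne_nil ha hb,
    fun a b c _ _ _ => compOp_assoc a b c,
    fun a _ => ⟨compOp_one_left a, compOp_one_right a⟩⟩
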